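/- Let f be an irreducible Weierstrass polynomial of degree n with Puiseux characteristic (b₀,...,b_g), and let γ, γ_j be two Newton–Puiseux roots of f with γ_j obtained from γ by the substitution x^{1/n} ↦ ω_j x^{1/n} for an n-th root of unity ω_j. Then ord_x(γ - γ_j) ≥ b_{k+1}/b₀ if and only if ω_j is an l_k-th root of unity, where l_k = gcd(b₀,...,b_k). -/

import Mathlib

noncomputable section

open Polynomial

/-- The substitution `x^{1/n} ↦ ε·x^{1/n}` on fractional power series: it sends
`Σ a_{i} x^{i/n}` to `Σ a_{i} ε^{i} x^{i/n}` (here the exponent of `ε` at `x^q`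
is the integer `q·n`). -/
def twist (n : ℕ) (ε : ℂ) (γ : HahnSeries ℚ ℂ) : HahnSeries ℚ ℂ where
  coeff q := ε ^ (q * n : ℚ).num * γ.coeff q
  isPWO_support' := γ.isPWO_support.mono (by
    intro q hq
    simp only [Function.mem_support] at hq ⊢
    intro h
    simp [h] at hq)

/-!
If `ω^{l_k} = 1` then `ω^i = 1` for every exponent `i/n` of `γ` below `b_{k+1}/n`, since all of
these are multiples of `l_k`; so `γ` and its twist agree below `b_{k+1}/n`. Conversely, if they
agree there, then `ω^{b_{m+1}} = 1` for all `m < k`, and `l_k = gcd(n, b_1, …, b_k)` gives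
`ω^{l_k} = 1`. With `d = orderOf ω` both directions are divisibility statements about `d`,
the `l_m` and the exponents of `γ`.
-/

section CharacteristicSequence

variable {S : Set ℕ} {b l : ℕ → ℕ} {g : ℕ}

theorem charGcd_dvd_of_le (hl : ∀ m, m < g → l (m + 1) = Nat.gcd (l m) (b (m + 1)))
    {m k : ℕ} (hmk : m ≤ k) (hkg : k ≤ g) : l k ∣ l m := by
  induction k, hmk using Nat.le_induction with
  | base => rfl
  | succ k _ ih =>
    rw [hl k (by omega)]
    exact (Nat.gcd_dvd_left _ _).trans (ih (by omega))

variable (hchar : ∀ m, m < g →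
    ({i : ℕ | i ∈ S ∧ ¬ l m ∣ i}.Nonempty ∧ b (m + 1) = sInf {i : ℕ | i ∈ S ∧ ¬ l m ∣ i}))
include hchar

theorem charExp_mem {m : ℕ} (hm : m < g) : b (m + 1) ∈ S ∧ ¬ l m ∣ b (m + 1) := by
  rw [(hchar m hm).2]
  exact Nat.sInf_mem (hchar m hm).1

theorem charGcd_dvd_of_mem_of_lt {m : ℕ} (hm : m < g) {i : ℕ} (hi : i ∈ S) (hib : i < b (m + 1)) :
    l m ∣ i := by
  rw [(hchar m hm).2] at hib
  by_contra h
  exact Nat.notMem_of_lt_sInf hib ⟨hi, h⟩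

variable (hl : ∀ m, m < g → l (m + 1) = Nat.gcd (l m) (b (m + 1)))
include hl

theorem charExp_lt_charExp {m k : ℕ} (hmk : m < k) (hkg : k < g) : b (m + 1) < b (k + 1) := by
  obtain ⟨hbk, hndvd⟩ := charExp_mem hchar hkg
  have hle : b (m + 1) ≤ b (k + 1) := by
    rw [(hchar m (hmk.trans hkg)).2]
    exact Nat.sInf_le ⟨hbk, fun h ↦ hndvd ((charGcd_dvd_of_le hl hmk.le hkg.le).trans h)⟩
  refine hle.lt_of_ne fun heq ↦ hndvd ?_
  rw [← heq]
  exact (charGcd_dvd_of_le hl hmk hkg.le).trans (hl m (hmk.trans hkg) ▸ Nat.gcd_dvd_right _ _)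

theorem dvd_charGcd_iff {d k : ℕ} (hd : d ∣ l 0) (hk : k < g) :
    d ∣ l k ↔ ∀ i ∈ S, i < b (k + 1) → d ∣ i := by
  refine ⟨fun h i hi hib ↦ h.trans (charGcd_dvd_of_mem_of_lt hchar hk hi hib), fun h ↦ ?_⟩
  suffices ∀ m ≤ k, d ∣ l m from this k le_rfl
  intro m hm
  induction m with
  | zero => exact hd
  | succ m ih =>
    rw [hl m (by omega), Nat.dvd_gcd_iff]
    exact ⟨ih (by omega), h _ (charExp_mem hchar (by omega)).1
      (charExp_lt_charExp hchar hl (by omega) hk)⟩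

end CharacteristicSequence

theorem twist_coeff_natCast_div {n : ℕ} (hn : n ≠ 0) (ε : ℂ) (γ : HahnSeries ℚ ℂ) (i : ℕ) :
    (twist n ε γ).coeff ((i : ℚ) / n) = ε ^ i * γ.coeff ((i : ℚ) / n) := by
  change ε ^ ((i : ℚ) / n * n).num * _ = _
  rw [div_mul_cancel₀ _ (Nat.cast_ne_zero.mpr hn)]
  norm_num

theorem support_sub_twist_subset (n : ℕ) (ε : ℂ) (γ : HahnSeries ℚ ℂ) :
    (γ - twist n ε γ).support ⊆ γ.support := by
  intro q hq h
  apply hq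
  simp [HahnSeries.coeff_sub, twist, show γ.coeff q = 0 from h]

theorem le_of_coeff_sub_twist_ne_zero_iff {n : ℕ} (hn : n ≠ 0) (ε : ℂ) {γ : HahnSeries ℚ ℂ}
    (hγ : ∀ q ∈ γ.support, ∃ i : ℕ, q = (i : ℚ) / n) (N : ℕ) :
    (∀ q : ℚ, (γ - twist n ε γ).coeff q ≠ 0 → (N : ℚ) / n ≤ q) ↔
      ∀ i : ℕ, γ.coeff ((i : ℚ) / n) ≠ 0 → i < N → ε ^ i = 1 := by
  have hnpos : (0 : ℚ) < n := by positivity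
  have hcoeff (i : ℕ) : (γ - twist n ε γ).coeff ((i : ℚ) / n) = (1 - ε ^ i) * γ.coeff (i / n) := by
    rw [HahnSeries.coeff_sub, twist_coeff_natCast_div hn]
    ring
  constructor
  · intro h i hi hiN
    by_contra hε
    have := h _ (by rw [hcoeff]; exact mul_ne_zero (sub_ne_zero.mpr (Ne.symm hε)) hi)
    rw [div_le_div_iff_of_pos_right hnpos, Nat.cast_le] at this
    omega
  · intro h q hq
    obtain ⟨i, rfl⟩ := hγ q (support_sub_twist_subset n ε γ hq)
    rw [hcoeff] at hq
    rw [div_le_div_iff_of_pos_right hnpos, Nat.cast_le]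
    by_contra hiN
    exact hq (by rw [h i (right_ne_zero_of_mul hq) (by omega), sub_self, zero_mul])

theorem contact_order_iff_root_of_unity_general (n g : ℕ) (hn : 0 < n)
    (γ : HahnSeries ℚ ℂ)
    (hγsupp : γ.support ⊆ {q : ℚ | ∃ i : ℕ, 1 ≤ i ∧ q = (i : ℚ) / n})
    (b l : ℕ → ℕ)
    (hl0 : l 0 = n)
    (hl : ∀ m, m < g → l (m + 1) = Nat.gcd (l m) (b (m + 1)))
    (hchar : ∀ m, m < g →
      ({i : ℕ | γ.coeff ((i : ℚ) / n) ≠ 0 ∧ ¬ l m ∣ i}.Nonempty ∧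
       b (m + 1) = sInf {i : ℕ | γ.coeff ((i : ℚ) / n) ≠ 0 ∧ ¬ l m ∣ i}))
    (k : ℕ) (hk : k < g) (ωj : ℂ) (hωj : ωj ^ n = 1) :
    (∀ q : ℚ, (γ - twist n ωj γ).coeff q ≠ 0 → (b (k + 1) : ℚ) / n ≤ q) ↔
      ωj ^ (l k) = 1 := by
  have hγ : ∀ q ∈ γ.support, ∃ i : ℕ, q = (i : ℚ) / n := fun q hq ↦
    let ⟨i, _, hi⟩ := hγsupp hq; ⟨i, hi⟩
  rw [le_of_coeff_sub_twist_ne_zero_iff hn.ne' ωj hγ, ← orderOf_dvd_iff_pow_eq_one]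
  simp_rw [← orderOf_dvd_iff_pow_eq_one]
  exact (dvd_charGcd_iff (S := {i | γ.coeff ((i : ℚ) / n) ≠ 0}) hchar hl
    (hl0 ▸ orderOf_dvd_of_pow_eq_one hωj) hk).symm

/-- Let `f` be an irreducible Weierstrass polynomial of degree `n = b₀` with Puiseux
characteristic `(b₀,...,b_g)` (characterized on the root `γ` by: `b_{k+1}` is the smallest
exponent `i` in the support of `γ` not divisible by `l_k = gcd(b₀,...,b_k)`).  Let `γ_j` be
the root obtained from `γ` by `x^{1/n} ↦ ω_j x^{1/n}`, `ω_j^n = 1`.  Then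
`ord_x(γ - γ_j) ≥ b_{k+1}/b₀` if and only if `ω_j` is an `l_k`-th root of unity. -/
theorem contact_order_iff_root_of_unity (n g : ℕ) (hn : 0 < n) (hg : 1 ≤ g)
    (f : Polynomial (PowerSeries ℂ)) (hmonic : f.Monic) (hdeg : f.natDegree = n)
    (hW : ∀ j, j < n → PowerSeries.constantCoeff (f.coeff j) = 0)
    (hirr : Irreducible f)
    (γ : HahnSeries ℚ ℂ)
    (hγsupp : γ.support ⊆ {q : ℚ | ∃ i : ℕ, 1 ≤ i ∧ q = (i : ℚ) / n})
    (hγ : Polynomial.eval₂ (HahnSeries.ofPowerSeries ℚ ℂ) γ f = 0)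
    (b l : ℕ → ℕ)
    (hb0 : b 0 = n) (hl0 : l 0 = n)
    (hl : ∀ m, m < g → l (m + 1) = Nat.gcd (l m) (b (m + 1)))
    (hlg : l g = 1)
    (hchar : ∀ m, m < g →
      ({i : ℕ | γ.coeff ((i : ℚ) / n) ≠ 0 ∧ ¬ l m ∣ i}.Nonempty ∧
       b (m + 1) = sInf {i : ℕ | γ.coeff ((i : ℚ) / n) ≠ 0 ∧ ¬ l m ∣ i}))
    (k : ℕ) (hk : k < g) (ωj : ℂ) (hωj : ωj ^ n = 1) :
    (∀ q : ℚ, (γ - twist n ωj γ).coeff q ≠ 0 → (b (k + 1) : ℚ) / n ≤ q) ↔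
      ωj ^ (l k) = 1 :=
  contact_order_iff_root_of_unity_general n g hn γ hγsupp b l hl0 hl hchar k hk ωj hωj

end
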